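/- MMin worst-case guarantee after one iteration: let f_1,…,f_m be monotone submodular with f_i(∅)=0 and f_i({v}) > 0 for all v, define h_i(X) = Σ_{j∈X} f_i({j}), and suppose the partition π̂ satisfies max_i h_i(A_i^{π̂}) ≤ α · min_π max_i h_i(A_i^π) for α ≥ 1. Then max_i f_i(A_i^{π̂}) ≤ α · [max_i |A_i^{π*}| / (1+(|A_i^{π*}|−1)(1−κ_{f_i}(A_i^{π*})))] · max_i f_i(A_i^{π*}), where π* is an optimal partition for min_π max_i f_i(A_i^π) and κ_f(A) = 1 − min_{v∈A} f(v|A\v)/f({v}). -/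
import Mathlib


open Finset

def Submodular {V : Type*} [DecidableEq V] (f : Finset V → ℝ) : Prop :=
  ∀ S T : Finset V, f (S ∪ T) + f (S ∩ T) ≤ f S + f T

def IsPartition {V : Type*} [Fintype V] [DecidableEq V] {m : ℕ}
    (A : Fin m → Finset V) : Prop :=
  (∀ i j, i ≠ j → Disjoint (A i) (A j)) ∧ Finset.univ.biUnion A = Finset.univ

lemma subadd {V : Type*} [DecidableEq V] (f : Finset V → ℝ) (hsub : Submodular f)
    (h0 : f ∅ = 0) : ∀ S : Finset V, f S ≤ ∑ j ∈ S, f {j} := by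
  intro S
  induction S using Finset.induction_on with
  | empty => simp [h0]
  | @insert a s ha ih =>
    have h1 := hsub {a} s
    have e1 : ({a} : Finset V) ∪ s = insert a s := by ext x; simp
    have e2 : ({a} : Finset V) ∩ s = ∅ := by
      ext x; simp only [mem_inter, mem_singleton, notMem_empty, iff_false]
      rintro ⟨rfl, hx⟩; exact ha hx
    rw [e1, e2, h0] at h1
    rw [Finset.sum_insert ha]
    linarith

lemma key {V : Type*} [DecidableEq V] (f : Finset V → ℝ) (hsub : Submodular f)
    (A : Finset V) (t : ℝ)
    (ht : ∀ u ∈ A, t * f {u} ≤ f A - f (A.erase u)) :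
    ∀ n : ℕ, ∀ B ⊆ A, B.card ≤ n → ∀ v ∈ B, f {v} + t * ∑ u ∈ B.erase v, f {u} ≤ f B := by
  intro n
  induction n with
  | zero =>
    intro B hBA hc v hv
    have : B = ∅ := Finset.card_eq_zero.1 (Nat.le_zero.1 hc)
    subst this; simp at hv
  | succ n ih =>
    intro B hBA hc v hv
    by_cases he : B.erase v = ∅
    · have hB : B = {v} := by
        apply Finset.eq_singleton_iff_unique_mem.2
        refine ⟨hv, fun x hx => ?_⟩
        by_contra hxv
        exact absurd he (Finset.ne_empty_of_mem (Finset.mem_erase.2 ⟨hxv, hx⟩))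
      rw [he]; simp [hB]
    · obtain ⟨u, hu⟩ := Finset.nonempty_iff_ne_empty.2 he
      have huv : u ≠ v := Finset.ne_of_mem_erase hu
      have huB : u ∈ B := Finset.mem_of_mem_erase hu
      have hvB' : v ∈ B.erase u := Finset.mem_erase.2 ⟨Ne.symm huv, hv⟩
      have step : f A + f (B.erase u) ≤ f B + f (A.erase u) := by
        have h1 := hsub B (A.erase u)
        have e1 : B ∪ A.erase u = A := by
          apply Finset.Subset.antisymm
          · exact Finset.union_subset hBA (Finset.erase_subset _ _)
          · intro x hx
            by_cases hxu : x = u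
            · subst hxu; exact Finset.mem_union_left _ huB
            · exact Finset.mem_union_right _ (Finset.mem_erase.2 ⟨hxu, hx⟩)
        have e2 : B ∩ A.erase u = B.erase u := by
          ext x
          simp only [mem_inter, mem_erase]
          constructor
          · rintro ⟨hxB, hxu, _⟩; exact ⟨hxu, hxB⟩
          · rintro ⟨hxu, hxB⟩; exact ⟨hxB, hxu, hBA hxB⟩
        rw [e1, e2] at h1
        linarith
      have hstep2 : t * f {u} ≤ f B - f (B.erase u) := by
        have := ht u (hBA huB); linarith
      have hcard : (B.erase u).card ≤ n := by
        have := Finset.card_erase_of_mem huB; omega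
      have ihh := ih (B.erase u) (le_trans (Finset.erase_subset _ _) hBA) hcard v hvB'
      have hsum : ∑ x ∈ B.erase v, f {x} = f {u} + ∑ x ∈ (B.erase u).erase v, f {x} := by
        have hcomm : (B.erase u).erase v = (B.erase v).erase u := by
          ext x; simp only [mem_erase]; tauto
        rw [hcomm]
        exact (Finset.add_sum_erase _ _ (Finset.mem_erase.2 ⟨huv, huB⟩)).symm
      rw [hsum]
      have hexp : t * (f {u} + ∑ x ∈ (B.erase u).erase v, f {x}) =
          t * f {u} + t * ∑ x ∈ (B.erase u).erase v, f {x} := by ring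
      linarith

lemma tnonneg {V : Type*} [DecidableEq V] (f : Finset V → ℝ)
    (hmono : ∀ S T : Finset V, S ⊆ T → f S ≤ f T) (hpos : ∀ v : V, 0 < f {v})
    (A : Finset V) (hA : A.Nonempty) :
    0 ≤ A.inf' hA (fun v => (f A - f (A.erase v)) / f {v}) := by
  apply Finset.le_inf'
  intro v hv
  apply div_nonneg _ (hpos v).le
  have := hmono (A.erase v) A (Finset.erase_subset _ _)
  linarith

lemma curvature {V : Type*} [DecidableEq V] (f : Finset V → ℝ) (hsub : Submodular f)
    (hmono : ∀ S T : Finset V, S ⊆ T → f S ≤ f T) (hpos : ∀ v : V, 0 < f {v})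
    (A : Finset V) (hA : A.Nonempty) :
    ∑ j ∈ A, f {j} ≤ (A.card : ℝ) /
      (1 + ((A.card : ℝ) - 1) * A.inf' hA (fun v => (f A - f (A.erase v)) / f {v})) * f A := by
  set t := A.inf' hA (fun v => (f A - f (A.erase v)) / f {v}) with htdef
  have ht0 : 0 ≤ t := tnonneg f hmono hpos A hA
  have htu : ∀ u ∈ A, t * f {u} ≤ f A - f (A.erase u) := by
    intro u hu
    have h1 : t ≤ (f A - f (A.erase u)) / f {u} := Finset.inf'_le _ hu
    have hp := hpos u
    calc t * f {u} ≤ ((f A - f (A.erase u)) / f {u}) * f {u} :=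
          mul_le_mul_of_nonneg_right h1 hp.le
      _ = f A - f (A.erase u) := div_mul_cancel₀ _ (ne_of_gt hp)
  set S := ∑ j ∈ A, f {j} with hSdef
  have hmain : ∀ v ∈ A, f {v} + t * (S - f {v}) ≤ f A := by
    intro v hv
    have h := key f hsub A t htu A.card A (Finset.Subset.refl A) le_rfl v hv
    have hsum : ∑ u ∈ A.erase v, f {u} = S - f {v} := by
      rw [hSdef, Finset.sum_erase_eq_sub hv]
    rwa [hsum] at h
  have hn : (1:ℝ) ≤ (A.card : ℝ) := by
    have := Finset.card_pos.2 hA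
    exact_mod_cast this
  have hD : (1:ℝ) ≤ 1 + ((A.card:ℝ)-1)*t := by nlinarith
  have h2 : ∑ v ∈ A, (f {v} + t * (S - f {v})) ≤ ∑ v ∈ A, f A := Finset.sum_le_sum hmain
  have h3 : ∑ v ∈ A, (f {v} + t * (S - f {v})) = S + t * ((A.card:ℝ)*S - S) := by
    rw [Finset.sum_add_distrib, ← Finset.mul_sum, Finset.sum_sub_distrib, Finset.sum_const,
      nsmul_eq_mul, ← hSdef]
  have h4 : ∑ v ∈ A, f A = (A.card:ℝ) * f A := by
    rw [Finset.sum_const, nsmul_eq_mul]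
  rw [div_mul_eq_mul_div, le_div_iff₀ (by linarith : (0:ℝ) < 1 + ((A.card:ℝ)-1)*t)]
  nlinarith [h2]

theorem stmt18 {V : Type*} [Fintype V] [DecidableEq V] {m : ℕ}
    (hne : (Finset.univ : Finset (Fin m)).Nonempty)
    (f : Fin m → Finset V → ℝ)
    (hsub : ∀ i, Submodular (f i))
    (hmono : ∀ i, ∀ S T : Finset V, S ⊆ T → f i S ≤ f i T)
    (hnorm : ∀ i, f i ∅ = 0)
    (hpos : ∀ i (v : V), 0 < f i {v})
    (α : ℝ) (hα : 1 ≤ α)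
    (πh πs : Fin m → Finset V) (hπh : IsPartition πh) (hπs : IsPartition πs)
    (hblk : ∀ i, (πs i).Nonempty)
    -- πs is an optimal partition for min over partitions of max_i f_i
    (hopt : ∀ π : Fin m → Finset V, IsPartition π →
      univ.sup' hne (fun i => f i (πs i)) ≤ univ.sup' hne (fun i => f i (π i)))
    -- πh is an α-approximate minimizer for the modular upper bounds h_i(X) = Σ_{j∈X} f_i({j})
    (happrox : ∀ π : Fin m → Finset V, IsPartition π →
      univ.sup' hne (fun i => ∑ j ∈ πh i, f i {j}) ≤
        α * univ.sup' hne (fun i => ∑ j ∈ π i, f i {j})) :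
    univ.sup' hne (fun i => f i (πh i)) ≤
      α * univ.sup' hne (fun i =>
          ((πs i).card : ℝ) /
            (1 + (((πs i).card : ℝ) - 1) *
              (πs i).inf' (hblk i) (fun v => (f i (πs i) - f i ((πs i).erase v)) / f i {v}))) *
        univ.sup' hne (fun i => f i (πs i)) := by
  set C : Fin m → ℝ := fun i =>
    ((πs i).card : ℝ) /
      (1 + (((πs i).card : ℝ) - 1) *
        (πs i).inf' (hblk i) (fun v => (f i (πs i) - f i ((πs i).erase v)) / f i {v})) with hC
  have hf0 : ∀ i (S : Finset V), 0 ≤ f i S := by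
    intro i S
    have := hmono i ∅ S (Finset.empty_subset S)
    rw [hnorm i] at this; exact this
  have hC0 : ∀ i, 0 ≤ C i := by
    intro i
    apply div_nonneg (Nat.cast_nonneg _)
    have ht0 := tnonneg (f i) (hmono i) (hpos i) (πs i) (hblk i)
    have hn : (1:ℝ) ≤ ((πs i).card : ℝ) := by
      exact_mod_cast Finset.card_pos.2 (hblk i)
    nlinarith
  set M := univ.sup' hne C with hM
  set F := univ.sup' hne (fun i => f i (πs i)) with hF
  have hM0 : 0 ≤ M := by
    obtain ⟨i0, hi0⟩ := hne
    exact le_trans (hC0 i0) (Finset.le_sup' C hi0)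
  have step1 : univ.sup' hne (fun i => f i (πh i)) ≤
      univ.sup' hne (fun i => ∑ j ∈ πh i, f i {j}) := by
    apply Finset.sup'_le
    intro i hi
    exact le_trans (subadd (f i) (hsub i) (hnorm i) (πh i))
      (Finset.le_sup' (fun i => ∑ j ∈ πh i, f i {j}) hi)
  have step2 := happrox πs hπs
  have step3 : univ.sup' hne (fun i => ∑ j ∈ πs i, f i {j}) ≤ M * F := by
    apply Finset.sup'_le
    intro i hi
    calc ∑ j ∈ πs i, f i {j} ≤ C i * f i (πs i) :=
          curvature (f i) (hsub i) (hmono i) (hpos i) (πs i) (hblk i)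
      _ ≤ M * F := by
          apply mul_le_mul (Finset.le_sup' C hi)
            (Finset.le_sup' (fun i => f i (πs i)) hi) (hf0 i (πs i)) hM0
  calc univ.sup' hne (fun i => f i (πh i))
      ≤ univ.sup' hne (fun i => ∑ j ∈ πh i, f i {j}) := step1
    _ ≤ α * univ.sup' hne (fun i => ∑ j ∈ πs i, f i {j}) := step2
    _ ≤ α * (M * F) := by
        apply mul_le_mul_of_nonneg_left step3 (by linarith)
    _ = α * M * F := by ring
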